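/- Fix H ∈ (1/2,1) and s > 0. For 0 ≤ t ≤ 1 let φ_t(x,y) = g_s(t,x,y)/x^{2−H} for x > 0, y ≤ 0. Then ∫_{−∞}^{−t−s} ∫_{−t−s−y}^{∞} φ_t(x,y) · ( t / (2 x^{2−H}) ) dx dy = t^{2H} / ( 4(1−H)(3−2H)(2H−1) ). -/

import Mathlib

/-!
For `y < -t - s` and `x > a := -t - s - y > 0` the kernel is `g_s(t,x,y) = min (x - a) t`, so the
integrand is `(t/2) min (x - a, t) x^(r-2)` with `r = 2H - 2 ∈ (-1, 0)`. Writing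
`min (x - a) t = (x - a) - (x - (a + t))₊` gives the inner integral as `J a - J (a + t)`, where
`J a = ∫_a^∞ (x - a) x^(r-2) dx = a^r / ((r-1) r)`. After the substitution `y ↦ a`, the outer
integral is `∫_0^∞ (a^r - (a+t)^r) da = t^(r+1) / (r+1)`: the integrand is the derivative of
`(a^(r+1) - (a+t)^(r+1)) / (r+1)`, which tends to `0` at infinity by Bernoulli's inequality.
-/

open MeasureTheory ProbabilityTheory Filter Topology

noncomputable section

/-- The kernel `h(t,x,y) = ((t+y) ∧ 0 + x)₊ − (y ∧ 0 + x)₊`. -/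
def hker (t x y : ℝ) : ℝ := max (min (t + y) 0 + x) 0 - max (min y 0 + x) 0

/-- The kernel `g_s(t,x,y) = h(t+s,x,y) − h(s,x,y)`. -/
def gker (s t x y : ℝ) : ℝ := hker (t + s) x y - hker s x y

/-- The constant `C_H = H(2H−1)(1−H)(3−2H)`. -/
def CH (H : ℝ) : ℝ := H * (2 * H - 1) * (1 - H) * (3 - 2 * H)

/-- A Poisson random measure with intensity `β` times Lebesgue measure on a region
`D ⊆ ℝ × ℝ`: for measurable `A ⊆ D` of finite Lebesgue measure, `M · A` is a Poisson
random variable with mean `β · volume A`; counts over disjoint sets are independent;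
and `M ω` is finitely additive on disjoint sets of finite measure. -/
structure IsPoissonRandomMeasure {Ω : Type*} [MeasureSpace Ω]
    (β : ℝ) (D : Set (ℝ × ℝ)) (M : Ω → Set (ℝ × ℝ) → ℕ) : Prop where
  measurable_eval : ∀ A : Set (ℝ × ℝ), MeasurableSet A → Measurable fun ω => M ω A
  law : ∀ A : Set (ℝ × ℝ), MeasurableSet A → A ⊆ D → volume A ≠ ⊤ →
    Measure.map (fun ω => M ω A) ℙ = poissonMeasure ((β * (volume A).toReal).toNNReal)
  indep : ∀ {ι : Type} (A : ι → Set (ℝ × ℝ)), (∀ i, MeasurableSet (A i)) →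
    (∀ i, A i ⊆ D) → (∀ i, volume (A i) ≠ ⊤) → Pairwise (Function.onFun Disjoint A) →
    iIndepFun (fun i ω => M ω (A i)) ℙ
  add : ∀ (ω : Ω) (A B : Set (ℝ × ℝ)), MeasurableSet A → MeasurableSet B →
    volume A ≠ ⊤ → volume B ≠ ⊤ → Disjoint A B → M ω (A ∪ B) = M ω A + M ω B

/-- A two-parameter Poisson process with intensity `β` on `ℝ₊ × ℝ₋`: a jointly
measurable `ℕ`-valued random field with `N ω x y = M ω ([0,x] × [y,0])` for a Poisson
random measure `M` with intensity `β` times Lebesgue measure on `ℝ₊ × ℝ₋`. -/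
def IsTwoParamPoisson {Ω : Type*} [MeasureSpace Ω] (β : ℝ)
    (N : Ω → ℝ → ℝ → ℕ) : Prop :=
  Measurable (fun p : Ω × ℝ × ℝ => N p.1 p.2.1 p.2.2) ∧
  ∃ M : Ω → Set (ℝ × ℝ) → ℕ,
    IsPoissonRandomMeasure β (Set.Ici 0 ×ˢ Set.Iic 0) M ∧
    ∀ ω x y, N ω x y = M ω (Set.Icc 0 x ×ˢ Set.Icc y 0)

/-- A two-parameter Poisson process with intensity `β` on `ℝ × ℝ`: a jointly measurable
`ℕ`-valued random field with `N ω x y = M ω (R(x,y))` where `R(x,y)` is the closed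
rectangle with opposite corners `(0,0)` and `(x,y)`, for a Poisson random measure `M`
with intensity `β` times Lebesgue measure. -/
def IsTwoParamPoissonPlane {Ω : Type*} [MeasureSpace Ω] (β : ℝ)
    (N : Ω → ℝ → ℝ → ℕ) : Prop :=
  Measurable (fun p : Ω × ℝ × ℝ => N p.1 p.2.1 p.2.2) ∧
  ∃ M : Ω → Set (ℝ × ℝ) → ℕ,
    IsPoissonRandomMeasure β Set.univ M ∧
    ∀ ω x y, N ω x y = M ω (Set.uIcc 0 x ×ˢ Set.uIcc 0 y)

/-- `I₁(n,f)`, the integral over `Ω₁ = {0 < x₁ ≤ x₂, y₂ ≤ y₁ ≤ 0}`;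
here `p.1 = (x₁, y₁)` and `p.2 = (x₂, y₂)`. -/
def I1 (n : ℝ) (f : ℝ → ℝ → ℝ) : ℝ :=
  n ^ 2 * ∫ p in {p : (ℝ × ℝ) × ℝ × ℝ |
      0 < p.1.1 ∧ p.1.1 ≤ p.2.1 ∧ p.2.2 ≤ p.1.2 ∧ p.1.2 ≤ 0},
    f p.1.1 p.1.2 * f p.2.1 p.2.2 * Real.sqrt (p.1.1 * |p.1.2|) *
      Real.sqrt (p.2.1 * |p.2.2|) * Real.exp (-2 * n * (p.1.1 * p.1.2 - p.2.1 * p.2.2))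

/-- `I₂(n,f)`, the integral over `Ω₂ = {0 < x₁ ≤ x₂, y₁ < y₂ ≤ 0}`;
here `p.1 = (x₁, y₁)` and `p.2 = (x₂, y₂)`. -/
def I2 (n : ℝ) (f : ℝ → ℝ → ℝ) : ℝ :=
  n ^ 2 * ∫ p in {p : (ℝ × ℝ) × ℝ × ℝ |
      0 < p.1.1 ∧ p.1.1 ≤ p.2.1 ∧ p.1.2 < p.2.2 ∧ p.2.2 ≤ 0},
    f p.1.1 p.1.2 * f p.2.1 p.2.2 * Real.sqrt (p.1.1 * |p.1.2|) *
      Real.sqrt (p.2.1 * |p.2.2|) *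
      Real.exp (-2 * n * (p.1.1 * (p.2.2 - p.1.2) - (p.2.1 - p.1.1) * p.2.2))

/-- `F_{n,f}(x,y) = √(x|y|) n² ∫_x^∞ ∫_y^0 f(x₂,y₂) √(x₂|y₂|)
e^{−2n[x(y₂−y)−(x₂−x)y₂]} dx₂ dy₂`. -/
def Fnf (n : ℝ) (f : ℝ → ℝ → ℝ) (x y : ℝ) : ℝ :=
  Real.sqrt (x * |y|) * n ^ 2 *
    ∫ q in Set.Ioi x ×ˢ Set.Ioc y 0,
      f q.1 q.2 * Real.sqrt (q.1 * |q.2|) *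
        Real.exp (-2 * n * (x * (q.2 - y) - (q.1 - x) * q.2))

end

section

open Set

lemma tendsto_rpow_add_sub_rpow_atTop {p t : ℝ} (hp0 : 0 ≤ p) (hp1 : p < 1) (ht : 0 ≤ t) :
    Tendsto (fun a : ℝ => (a + t) ^ p - a ^ p) atTop (𝓝 0) := by
  have hbound : Tendsto (fun a : ℝ => p * t * a ^ (p - 1)) atTop (𝓝 0) := by
    simpa using (tendsto_rpow_neg_atTop (by linarith : 0 < -(p - 1))).const_mul (p * t)
  refine tendsto_of_tendsto_of_tendsto_of_le_of_le' tendsto_const_nhds hbound ?_ ?_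
  all_goals filter_upwards [eventually_gt_atTop 0] with a ha
  · exact sub_nonneg.2 (Real.rpow_le_rpow ha.le (by linarith) hp0)
  · have hbern := rpow_one_add_le_one_add_mul_self
      (by have := div_nonneg ht ha.le; linarith : -1 ≤ t / a) hp0 hp1.le
    calc (a + t) ^ p - a ^ p = a ^ p * (1 + t / a) ^ p - a ^ p := by
          rw [← Real.mul_rpow ha.le (by positivity), mul_one_add, mul_div_cancel₀ _ ha.ne']
      _ ≤ a ^ p * (1 + p * (t / a)) - a ^ p := by gcongr
      _ = p * t * a ^ (p - 1) := by
          rw [Real.rpow_sub_one ha.ne']; ring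

lemma integral_Ioi_rpow_sub_rpow_add {r t : ℝ} (hr1 : -1 < r) (hr0 : r < 0) (ht : 0 ≤ t) :
    ∫ a in Ioi 0, (a ^ r - (a + t) ^ r) = t ^ (r + 1) / (r + 1) := by
  have hr : r + 1 ≠ 0 := by linarith
  set F : ℝ → ℝ := fun a => (a ^ (r + 1) - (a + t) ^ (r + 1)) / (r + 1)
  have hcont : ContinuousWithinAt F (Ici 0) 0 := by
    refine ContinuousAt.continuousWithinAt ?_
    fun_prop (disch := linarith)
  have hderiv : ∀ a ∈ Ioi (0 : ℝ), HasDerivAt F (a ^ r - (a + t) ^ r) a := by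
    intro a (ha : 0 < a)
    have h1 := Real.hasDerivAt_rpow_const (x := a) (p := r + 1) (Or.inl ha.ne')
    have h2 := ((hasDerivAt_id a).add_const t).rpow_const (p := r + 1)
      (Or.inl (by simp; linarith))
    refine ((h1.sub h2).div_const (r + 1)).congr_deriv ?_
    simp only [add_sub_cancel_right, id, one_mul]
    field_simp
  have hpos : ∀ a ∈ Ioi (0 : ℝ), 0 ≤ a ^ r - (a + t) ^ r := fun a (ha : 0 < a) =>
    sub_nonneg.2 (Real.rpow_le_rpow_of_nonpos ha (by linarith) hr0.le)
  have hlim : Tendsto F atTop (𝓝 0) := by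
    have := (tendsto_rpow_add_sub_rpow_atTop (p := r + 1) (by linarith) (by linarith) ht).neg
    simpa [F, neg_sub] using this.div_const (r + 1)
  rw [integral_Ioi_of_hasDerivAt_of_nonneg hcont hderiv hpos hlim]
  simp [F, Real.zero_rpow hr]
  ring

lemma sub_mul_rpow_eqOn {r a : ℝ} (ha : 0 < a) :
    EqOn (fun x : ℝ => (x - a) * x ^ (r - 2)) (fun x => x ^ (r - 1) - a * x ^ (r - 2))
      (Ioi a) := by
  intro x (hx : a < x)
  dsimp only
  rw [show r - 1 = r - 2 + 1 by ring, Real.rpow_add_one (by linarith)]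
  ring

lemma integrableOn_Ioi_sub_mul_rpow {r a : ℝ} (hr : r < 0) (ha : 0 < a) :
    IntegrableOn (fun x : ℝ => (x - a) * x ^ (r - 2)) (Ioi a) := by
  refine IntegrableOn.congr_fun ?_ (sub_mul_rpow_eqOn ha).symm measurableSet_Ioi
  exact (integrableOn_Ioi_rpow_of_lt (by linarith) ha).sub
    ((integrableOn_Ioi_rpow_of_lt (by linarith) ha).const_mul a)

lemma integral_Ioi_sub_mul_rpow {r a : ℝ} (hr : r < 0) (ha : 0 < a) :
    ∫ x in Ioi a, (x - a) * x ^ (r - 2) = a ^ r / ((r - 1) * r) := by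
  rw [setIntegral_congr_fun measurableSet_Ioi (sub_mul_rpow_eqOn ha),
    integral_sub (integrableOn_Ioi_rpow_of_lt (by linarith) ha)
      ((integrableOn_Ioi_rpow_of_lt (by linarith) ha).const_mul a),
    integral_const_mul, integral_Ioi_rpow_of_lt (by linarith) ha,
    integral_Ioi_rpow_of_lt (by linarith) ha,
    show r - 1 + 1 = r by ring, show r - 2 + 1 = r - 1 by ring,
    show a ^ r = a * a ^ (r - 1) by
      rw [mul_comm, ← Real.rpow_add_one ha.ne', sub_add_cancel]]
  have : r - 1 ≠ 0 := by linarith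
  have : r ≠ 0 := hr.ne
  field_simp
  ring

lemma min_sub_mul_rpow_eqOn {r a t : ℝ} :
    EqOn (fun x : ℝ => min (x - a) t * x ^ (r - 2))
      (fun x => (x - a) * x ^ (r - 2) -
        (Ioi (a + t)).indicator (fun x => (x - (a + t)) * x ^ (r - 2)) x)
      (Ioi a) := by
  intro x _
  by_cases hx : a + t < x
  · simp only [indicator_of_mem (mem_Ioi.2 hx), min_eq_right (by linarith : t ≤ x - a)]
    ring
  · simp only [indicator_of_notMem (fun h => hx (mem_Ioi.1 h)),
      min_eq_left (by linarith : x - a ≤ t), sub_zero]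

lemma integral_Ioi_min_sub_mul_rpow {r a t : ℝ} (hr : r < 0) (ha : 0 < a) (ht : 0 ≤ t) :
    ∫ x in Ioi a, min (x - a) t * x ^ (r - 2) = (a ^ r - (a + t) ^ r) / ((r - 1) * r) := by
  have hat : 0 < a + t := by linarith
  rw [setIntegral_congr_fun measurableSet_Ioi min_sub_mul_rpow_eqOn,
    integral_sub (integrableOn_Ioi_sub_mul_rpow hr ha)
      ((integrableOn_Ioi_sub_mul_rpow hr hat).integrable_indicator measurableSet_Ioi).integrableOn,
    setIntegral_indicator measurableSet_Ioi, Ioi_inter_Ioi, max_eq_right (by linarith),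
    integral_Ioi_sub_mul_rpow hr ha, integral_Ioi_sub_mul_rpow hr hat, sub_div]

lemma integral_Iio_comp_sub_left {E : Type*} [NormedAddCommGroup E] [NormedSpace ℝ E]
    (f : ℝ → E) (c : ℝ) : ∫ y in Iio c, f (c - y) = ∫ a in Ioi 0, f a := by
  have h := (Measure.measurePreserving_sub_left volume c).setIntegral_preimage_emb
    (MeasurableEquiv.subLeft c).measurableEmbedding f (Ioi 0)
  rwa [show (fun y => c - y) ⁻¹' Ioi 0 = Iio c by ext; simp] at h

lemma gker_eq_min {s t x y : ℝ} (ht : 0 ≤ t) (hy : y ≤ -t - s) (hx : -t - s - y ≤ x) :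
    gker s t x y = min (x - (-t - s - y)) t := by
  simp only [gker, hker]
  rw [min_eq_left (by linarith : t + s + y ≤ 0), min_eq_left (by linarith : s + y ≤ 0),
    max_eq_left (by linarith : 0 ≤ t + s + y + x)]
  rcases le_total (s + y + x) 0 with h | h
  · rw [max_eq_right h, min_eq_left (by linarith : x - (-t - s - y) ≤ t)]; ring
  · rw [max_eq_left h, min_eq_right (by linarith : t ≤ x - (-t - s - y))]; ring

lemma gker_div_rpow_mul_eq {H s t x y : ℝ} (ht : 0 ≤ t) (hy : y ≤ -t - s)
    (hx : -t - s - y < x) :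
    (gker s t x y / x ^ (2 - H)) * (t / (2 * x ^ (2 - H)))
      = t / 2 * (min (x - (-t - s - y)) t * x ^ (2 * H - 2 - 2)) := by
  have hx0 : 0 < x := by linarith
  have hpow : x ^ (2 * H - 2 - 2) = (x ^ (2 - H) * x ^ (2 - H))⁻¹ := by
    rw [← Real.rpow_add hx0, ← Real.rpow_neg hx0.le]
    ring_nf
  rw [gker_eq_min ht hy hx.le, hpow]
  ring

end

theorem stmt17_general {H s : ℝ} (hH : H ∈ Set.Ioo (1 / 2 : ℝ) 1)
    (t : ℝ) (ht : t ∈ Set.Icc (0 : ℝ) 1) :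
    (∫ y in Set.Iio (-t - s), ∫ x in Set.Ioi (-t - s - y),
        (gker s t x y / x ^ (2 - H)) * (t / (2 * x ^ (2 - H))))
      = t ^ (2 * H) / (4 * (1 - H) * (3 - 2 * H) * (2 * H - 1)) := by
  obtain ⟨hH1, hH2⟩ := hH
  have ht0 : 0 ≤ t := ht.1
  have hinner : ∀ y ∈ Set.Iio (-t - s),
      (∫ x in Set.Ioi (-t - s - y), (gker s t x y / x ^ (2 - H)) * (t / (2 * x ^ (2 - H))))
        = t / 2 * (((-t - s - y) ^ (2 * H - 2) - (-t - s - y + t) ^ (2 * H - 2))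
            / ((2 * H - 2 - 1) * (2 * H - 2))) := by
    intro y (hy : y < -t - s)
    have ha : 0 < -t - s - y := by linarith
    rw [← integral_Ioi_min_sub_mul_rpow (by linarith) ha ht0, ← integral_const_mul]
    exact setIntegral_congr_fun measurableSet_Ioi fun x hx => gker_div_rpow_mul_eq ht0 hy.le hx
  rw [setIntegral_congr_fun measurableSet_Iio hinner,
    integral_Iio_comp_sub_left (fun a => t / 2 * ((a ^ (2 * H - 2) - (a + t) ^ (2 * H - 2))
      / ((2 * H - 2 - 1) * (2 * H - 2)))),
    integral_const_mul, integral_div,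
    integral_Ioi_rpow_sub_rpow_add (by linarith) (by linarith) ht0]
  have hpow : t ^ (2 * H) = t * t ^ (2 * H - 2 + 1) := by
    rw [← Real.rpow_one_add' ht0 (by linarith)]
    ring_nf
  rw [hpow, show 4 * (1 - H) * (3 - 2 * H) * (2 * H - 1)
      = 2 * ((2 * H - 2 + 1) * ((2 * H - 2 - 1) * (2 * H - 2))) by ring]
  field_simp

/-- For `H ∈ (1/2,1)`, `s > 0`, `t ∈ [0,1]` and
`φ_t(x,y) = g_s(t,x,y)/x^{2−H}`,
`∫_{−∞}^{−t−s}∫_{−t−s−y}^∞ φ_t(x,y) · (t/(2x^{2−H})) dx dy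
= t^{2H}/(4(1−H)(3−2H)(2H−1))`. -/
theorem stmt17 {H s : ℝ} (hH : H ∈ Set.Ioo (1 / 2 : ℝ) 1) (hs : 0 < s)
    (t : ℝ) (ht : t ∈ Set.Icc (0 : ℝ) 1) :
    (∫ y in Set.Iio (-t - s), ∫ x in Set.Ioi (-t - s - y),
        (gker s t x y / x ^ (2 - H)) * (t / (2 * x ^ (2 - H))))
      = t ^ (2 * H) / (4 * (1 - H) * (3 - 2 * H) * (2 * H - 1)) :=
  stmt17_general hH t ht
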